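/- Let X, U, Y be complex Hilbert spaces, let Σ = (A,B,C,D) be a passive system with system operator T and transfer function θ(z) = D + z·C(I − zA)⁻¹B, and let D₋ be the positive square root of I − T*∘T on X ⊕ U. Let ι_X : X → X ⊕ U and ι_U : U → X ⊕ U be the canonical inclusions, and define φ(z) := D₋∘ι_U + z·(D₋∘ι_X)∘(I − zA)⁻¹∘B : U → X ⊕ U. Then for all complex z, w with |z| < 1 and |w| < 1: I_U − θ(w)*∘θ(z) = (1 − conj(w)·z) · (B*(I − conj(w)·A*)⁻¹)∘((I − zA)⁻¹B) + φ(w)*∘φ(z). -/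

import Mathlib

/-!
Write `S(z) = (I − zA)⁻¹B` and `P(z) = [z S(z); I] : U → X ⊕ U`, so that `φ(z) = D₋ P(z)`.
Passivity gives `‖A‖ ≤ ‖T‖ ≤ 1`, so `I − zA` is invertible for `|z| < 1`, and the resolvent
identity `S(z) = B + zA S(z)` turns `T P(z)` into the column `[S(z); θ(z)]`.
Since `D₋² = I − T*T`,
`φ(w)*φ(z) = P(w)*P(z) − (T P(w))*(T P(z)) = I + conj(w) z S(w)*S(z) − S(w)*S(z) − θ(w)*θ(z)`,
which rearranges to the claim.
-/

noncomputable section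

open ContinuousLinearMap

variable {X U Y : Type*}
  [NormedAddCommGroup X] [InnerProductSpace ℂ X] [CompleteSpace X]
  [NormedAddCommGroup U] [InnerProductSpace ℂ U] [CompleteSpace U]
  [NormedAddCommGroup Y] [InnerProductSpace ℂ Y] [CompleteSpace Y]

/-- The system operator `T(x,u) = (Ax + Bu, Cx + Du)` as a block operator between the
Hilbert space direct sums `X ⊕₂ U` and `X ⊕₂ Y`. -/
def sysOp (A : X →L[ℂ] X) (B : U →L[ℂ] X) (C : X →L[ℂ] Y) (D : U →L[ℂ] Y) :
    WithLp 2 (X × U) →L[ℂ] WithLp 2 (X × Y) :=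
  (((WithLp.prodContinuousLinearEquiv 2 ℂ X Y).symm : (X × Y) →L[ℂ] WithLp 2 (X × Y)).comp
      ((A.comp (fst ℂ X U) + B.comp (snd ℂ X U)).prod
        (C.comp (fst ℂ X U) + D.comp (snd ℂ X U)))).comp
    ((WithLp.prodContinuousLinearEquiv 2 ℂ X U : WithLp 2 (X × U) →L[ℂ] (X × U)))

/-- The transfer function `θ(z) = D + z·C(I − zA)⁻¹B` of the system `(A,B,C,D)`. -/
def transferFn (A : X →L[ℂ] X) (B : U →L[ℂ] X) (C : X →L[ℂ] Y) (D : U →L[ℂ] Y) (z : ℂ) :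
    U →L[ℂ] Y :=
  D + z • ((C.comp (Ring.inverse (1 - z • A))).comp B)

/-- Canonical inclusion of `X` into the Hilbert direct sum `X ⊕₂ U`. -/
def inclX : X →L[ℂ] WithLp 2 (X × U) :=
  ((WithLp.prodContinuousLinearEquiv 2 ℂ X U).symm : (X × U) →L[ℂ] WithLp 2 (X × U)).comp
    (inl ℂ X U)

/-- Canonical inclusion of `U` into the Hilbert direct sum `X ⊕₂ U`. -/
def inclU : U →L[ℂ] WithLp 2 (X × U) :=
  ((WithLp.prodContinuousLinearEquiv 2 ℂ X U).symm : (X × U) →L[ℂ] WithLp 2 (X × U)).comp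
    (inr ℂ X U)

/-- The function `φ(z) = D₋∘ι_U + z·(D₋∘ι_X)(I − zA)⁻¹B`. -/
def phiFn (A : X →L[ℂ] X) (B : U →L[ℂ] X)
    (Dm : WithLp 2 (X × U) →L[ℂ] WithLp 2 (X × U)) (z : ℂ) : U →L[ℂ] WithLp 2 (X × U) :=
  Dm.comp inclU + z • ((Dm.comp inclX).comp ((Ring.inverse (1 - z • A)).comp B))

section BlockColumn

variable {E F G : Type*}
  [NormedAddCommGroup E] [InnerProductSpace ℂ E]
  [NormedAddCommGroup F] [InnerProductSpace ℂ F]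
  [NormedAddCommGroup G] [InnerProductSpace ℂ G]

def blockColumn (f : G →L[ℂ] E) (g : G →L[ℂ] F) : G →L[ℂ] WithLp 2 (E × F) :=
  inclX ∘L f + inclU ∘L g

@[simp]
lemma blockColumn_apply (f : G →L[ℂ] E) (g : G →L[ℂ] F) (x : G) :
    blockColumn f g x = WithLp.toLp 2 (f x, g x) := by
  simp [blockColumn, inclX, inclU, WithLp.prodContinuousLinearEquiv_symm_apply,
    ← WithLp.toLp_add]

lemma adjoint_blockColumn_comp_blockColumn
    [CompleteSpace E] [CompleteSpace F] [CompleteSpace G] (f f' : G →L[ℂ] E) (g g' : G →L[ℂ] F) :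
    adjoint (blockColumn f g) ∘L blockColumn f' g' = adjoint f ∘L f' + adjoint g ∘L g' := by
  ext x
  refine ext_inner_left ℂ fun v => ?_
  simp [adjoint_inner_right, WithLp.prod_inner_apply, inner_add_right]

end BlockColumn

lemma Ring.inverse_one_sub_eq_one_add_mul {R : Type*} [Ring R] {a : R} (h : IsUnit (1 - a)) :
    Ring.inverse (1 - a) = 1 + a * Ring.inverse (1 - a) := by
  refine eq_add_of_sub_eq ?_
  simpa [sub_mul] using Ring.mul_inverse_cancel (1 - a) h

lemma isUnit_one_sub_smul_of_norm_le_one {R : Type*} [NormedRing R] [NormedAlgebra ℂ R]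
    [HasSummableGeomSeries R] {a : R} (ha : ‖a‖ ≤ 1) {z : ℂ} (hz : ‖z‖ < 1) :
    IsUnit (1 - z • a) :=
  isUnit_one_sub_of_norm_lt_one <| (norm_smul_le z a).trans_lt <| by
    simpa using mul_le_of_le_one_right (norm_nonneg z) ha |>.trans_lt hz

lemma adjoint_ringInverse_one_sub_smul {E : Type*} [NormedAddCommGroup E]
    [InnerProductSpace ℂ E] [CompleteSpace E] (A : E →L[ℂ] E) (w : ℂ) :
    adjoint (Ring.inverse (1 - w • A)) = Ring.inverse (1 - starRingEnd ℂ w • adjoint A) := by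
  rw [← star_eq_adjoint, ← Ring.inverse_star, star_sub, star_one, star_smul, star_eq_adjoint]
  rfl

lemma adjoint_comp_comp_eq_sub_of_comp_self_eq_one_sub {H K G : Type*}
    [NormedAddCommGroup H] [InnerProductSpace ℂ H] [CompleteSpace H]
    [NormedAddCommGroup K] [InnerProductSpace ℂ K] [CompleteSpace K]
    [NormedAddCommGroup G] [InnerProductSpace ℂ G] [CompleteSpace G]
    {T : H →L[ℂ] K} {Dm : H →L[ℂ] H} (hDm : IsSelfAdjoint Dm)
    (hsq : Dm ∘L Dm = ContinuousLinearMap.id ℂ H - adjoint T ∘L T) (P Q : G →L[ℂ] H) :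
    adjoint (Dm ∘L P) ∘L (Dm ∘L Q) = adjoint P ∘L Q - adjoint (T ∘L P) ∘L (T ∘L Q) := by
  calc adjoint (Dm ∘L P) ∘L (Dm ∘L Q) = adjoint P ∘L (Dm ∘L Dm) ∘L Q := by
        rw [adjoint_comp, hDm.adjoint_eq]; simp only [comp_assoc]
    _ = adjoint P ∘L Q - adjoint (T ∘L P) ∘L (T ∘L Q) := by
        rw [hsq, sub_comp, comp_sub, adjoint_comp]; simp only [comp_assoc, id_comp]

section

omit [CompleteSpace X] [CompleteSpace U] [CompleteSpace Y]

lemma sysOp_comp_blockColumn {G : Type*} [NormedAddCommGroup G] [InnerProductSpace ℂ G]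
    (A : X →L[ℂ] X) (B : U →L[ℂ] X) (C : X →L[ℂ] Y) (D : U →L[ℂ] Y)
    (f : G →L[ℂ] X) (g : G →L[ℂ] U) :
    sysOp A B C D ∘L blockColumn f g = blockColumn (A ∘L f + B ∘L g) (C ∘L f + D ∘L g) := by
  ext x
  simp [sysOp]

lemma norm_le_norm_sysOp (A : X →L[ℂ] X) (B : U →L[ℂ] X) (C : X →L[ℂ] Y) (D : U →L[ℂ] Y) :
    ‖A‖ ≤ ‖sysOp A B C D‖ := by
  refine opNorm_le_bound _ (norm_nonneg (sysOp A B C D)) fun x => ?_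
  calc ‖A x‖ ≤ ‖sysOp A B C D (WithLp.toLp 2 (x, 0))‖ := by
        simpa [sysOp] using WithLp.norm_fst_le _ (sysOp A B C D (WithLp.toLp 2 (x, 0)))
    _ ≤ ‖sysOp A B C D‖ * ‖x‖ := by
        simpa using (sysOp A B C D).le_opNorm (WithLp.toLp 2 (x, (0 : U)))

lemma sysOp_comp_blockColumn_resolvent (A : X →L[ℂ] X) (B : U →L[ℂ] X) (C : X →L[ℂ] Y)
    (D : U →L[ℂ] Y) {z : ℂ} (hz : IsUnit (1 - z • A)) :
    sysOp A B C D ∘L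
        blockColumn (z • (Ring.inverse (1 - z • A) ∘L B)) (ContinuousLinearMap.id ℂ U) =
      blockColumn (Ring.inverse (1 - z • A) ∘L B) (transferFn A B C D z) := by
  rw [sysOp_comp_blockColumn]
  congr 1
  · conv_rhs => rw [Ring.inverse_one_sub_eq_one_add_mul hz]
    simp only [comp_smul, comp_id, add_comp, one_def, id_comp, mul_def, smul_comp, comp_assoc]
    abel
  · simp only [transferFn, comp_smul, comp_id, comp_assoc]
    abel

lemma phiFn_eq_comp_blockColumn (A : X →L[ℂ] X) (B : U →L[ℂ] X)
    (Dm : WithLp 2 (X × U) →L[ℂ] WithLp 2 (X × U)) (z : ℂ) :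
    phiFn A B Dm z =
      Dm ∘L blockColumn (z • (Ring.inverse (1 - z • A) ∘L B)) (ContinuousLinearMap.id ℂ U) := by
  simp only [phiFn, blockColumn, comp_add, comp_smul, comp_id, comp_assoc]
  abel

end

theorem statement3 (A : X →L[ℂ] X) (B : U →L[ℂ] X) (C : X →L[ℂ] Y) (D : U →L[ℂ] Y)
    (hpass : ‖sysOp A B C D‖ ≤ 1)
    (Dm : WithLp 2 (X × U) →L[ℂ] WithLp 2 (X × U))
    (hDm_pos : Dm.IsPositive)
    (hDm_sq : Dm.comp Dm
      = ContinuousLinearMap.id ℂ (WithLp 2 (X × U))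
        - (ContinuousLinearMap.adjoint (sysOp A B C D)).comp (sysOp A B C D))
    (z w : ℂ) (hz : ‖z‖ < 1) (hw : ‖w‖ < 1) :
    ContinuousLinearMap.id ℂ U
        - (ContinuousLinearMap.adjoint (transferFn A B C D w)).comp (transferFn A B C D z)
      = ((1 : ℂ) - (starRingEnd ℂ) w * z) •
          (((ContinuousLinearMap.adjoint B).comp
              (Ring.inverse (1 - (starRingEnd ℂ) w • ContinuousLinearMap.adjoint A))).comp
            ((Ring.inverse (1 - z • A)).comp B))
        + (ContinuousLinearMap.adjoint (phiFn A B Dm w)).comp (phiFn A B Dm z) := by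
  have hA : ‖A‖ ≤ 1 := (norm_le_norm_sysOp A B C D).trans hpass
  rw [phiFn_eq_comp_blockColumn, phiFn_eq_comp_blockColumn,
    adjoint_comp_comp_eq_sub_of_comp_self_eq_one_sub hDm_pos.isSelfAdjoint hDm_sq,
    sysOp_comp_blockColumn_resolvent A B C D (isUnit_one_sub_smul_of_norm_le_one hA hz),
    sysOp_comp_blockColumn_resolvent A B C D (isUnit_one_sub_smul_of_norm_le_one hA hw),
    adjoint_blockColumn_comp_blockColumn, adjoint_blockColumn_comp_blockColumn,
    ← adjoint_ringInverse_one_sub_smul, ← adjoint_comp]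
  simp only [map_smulₛₗ, smul_comp, comp_smul, smul_smul, adjoint_id, id_comp]
  module

end
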